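/- In the algebra 𝔣_β, the images of the generators θ_i satisfy the β-twisted quantum Serre relations: for all i≠j in I, Σ_{k+k'=1−a_{ij}} (−1)^k β(i,j)^{−k} θ_i^{(k)} θ_j θ_i^{(k')} = 0. -/

import Mathlib

open scoped TensorProduct

noncomputable section

/-- A Cartan datum on `I`. -/
structure CartanDatum (I : Type) where
  c : I → I → ℤ
  symm : ∀ i j, c i j = c j i
  pos : ∀ i, 0 < c i i
  even : ∀ i, Even (c i i)
  dvd : ∀ i j, i ≠ j → c i i ∣ 2 * c i j
  nonpos : ∀ i j, i ≠ j → 2 * c i j ≤ 0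

namespace CartanDatum

variable {I : Type} (cd : CartanDatum I)

/-- `d i = (i·i)/2`. -/
def d (i : I) : ℤ := cd.c i i / 2

/-- `a i j = 2(i·j)/(i·i)`. -/
def a (i j : I) : ℤ := 2 * cd.c i j / cd.c i i

/-- Extension of the pairing to `ℕ[I] × ℕ[I]`. -/
def dotN (ν μ : I →₀ ℕ) : ℤ :=
  ν.sum fun i m => μ.sum fun j n => (m : ℤ) * (n : ℤ) * cd.c i j

end CartanDatum

/-- A multiplicative bilinear form `ℕ[I] × ℕ[I] → 𝔽`. -/
structure MultForm (I 𝔽 : Type) [Field 𝔽] where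
  f : (I →₀ ℕ) → (I →₀ ℕ) → 𝔽
  add_left : ∀ ν ν' μ, f (ν + ν') μ = f ν μ * f ν' μ
  add_right : ∀ μ ν ν', f μ (ν + ν') = f μ ν * f μ ν'
  ne_zero : ∀ ν μ, f ν μ ≠ 0

/-- The trivial multiplicative bilinear form, constantly `1`. -/
def trivMF (I 𝔽 : Type) [Field 𝔽] : MultForm I 𝔽 :=
  ⟨fun _ _ => 1, fun _ _ _ => by ring, fun _ _ _ => by ring, fun _ _ => one_ne_zero⟩

variable {I : Type}

/-- The generator `i` of `ℕ[I]`. -/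
def δN (i : I) : I →₀ ℕ := Finsupp.single i 1

/-- The model for the free algebra `'𝔣` on the `θ i`. -/
abbrev FA (𝔽 I : Type) [Field 𝔽] := MonoidAlgebra 𝔽 (FreeMonoid I)

/-- The generator `θ i` of `'𝔣`. -/
def θ (𝔽 : Type) [Field 𝔽] {I : Type} (i : I) : FA 𝔽 I :=
  MonoidAlgebra.of 𝔽 (FreeMonoid I) (FreeMonoid.of i)

/-- The `ℕ[I]`-degree of a word. -/
def wt [DecidableEq I] (w : FreeMonoid I) : I →₀ ℕ :=
  Multiset.toFinsupp (↑(FreeMonoid.toList w))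

/-- Homogeneity of degree `ν` in `'𝔣`. -/
def IsHomog {𝔽 : Type} [Field 𝔽] [DecidableEq I] (ν : I →₀ ℕ) (x : FA 𝔽 I) : Prop :=
  ∀ w ∈ Finsupp.support (x.coeff : FreeMonoid I →₀ 𝔽), wt w = ν

/-- The model for `'𝔣 ⊗ '𝔣` (basis: pairs of words). -/
abbrev TA (𝔽 I : Type) [Field 𝔽] := MonoidAlgebra 𝔽 (FreeMonoid I × FreeMonoid I)

/-- The tensor `x ⊗ y` in the model of `'𝔣 ⊗ '𝔣`. -/
def tmul {𝔽 : Type} [Field 𝔽] (x y : FA 𝔽 I) : TA 𝔽 I :=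
  Finsupp.sum (x.coeff : FreeMonoid I →₀ 𝔽) fun w a =>
    Finsupp.sum (y.coeff : FreeMonoid I →₀ 𝔽) fun u b =>
      MonoidAlgebra.ofCoeff (Finsupp.single (w, u) (a * b) : (FreeMonoid I × FreeMonoid I) →₀ 𝔽)

/-- The twisted multiplication on `'𝔣 ⊗ '𝔣`:
`(x₁⊗x₂)(y₁⊗y₂) = v^{-|y₁|·|x₂|} β(|x₂|,|y₁|) x₁y₁ ⊗ x₂y₂`. -/
def tMul [DecidableEq I] {𝔽 : Type} [Field 𝔽] (cd : CartanDatum I) (v : 𝔽)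
    (β : MultForm I 𝔽) (z z' : TA 𝔽 I) : TA 𝔽 I :=
  Finsupp.sum (z.coeff : (FreeMonoid I × FreeMonoid I) →₀ 𝔽) fun p a =>
    Finsupp.sum (z'.coeff : (FreeMonoid I × FreeMonoid I) →₀ 𝔽) fun q b =>
      MonoidAlgebra.ofCoeff (Finsupp.single (p.1 * q.1, p.2 * q.2)
        (a * b * v ^ (-(cd.dotN (wt q.1) (wt p.2))) * β.f (wt p.2) (wt q.1))
        : (FreeMonoid I × FreeMonoid I) →₀ 𝔽)

/-- The bilinear form on `'𝔣 ⊗ '𝔣` induced by a form `B` on `'𝔣`: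
`(x₁⊗x₂, y₁⊗y₂) = α(|x₁|,|x₂|) (x₁,y₁) (x₂,y₂)` for homogeneous `x₁, x₂`. -/
def pairT [DecidableEq I] {𝔽 : Type} [Field 𝔽] (α : MultForm I 𝔽)
    (B : FA 𝔽 I →ₗ[𝔽] FA 𝔽 I →ₗ[𝔽] 𝔽) (z z' : TA 𝔽 I) : 𝔽 :=
  Finsupp.sum (z.coeff : (FreeMonoid I × FreeMonoid I) →₀ 𝔽) fun p a =>
    Finsupp.sum (z'.coeff : (FreeMonoid I × FreeMonoid I) →₀ 𝔽) fun q b =>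
      a * b * α.f (wt p.1) (wt p.2)
        * B (MonoidAlgebra.single p.1 1) (MonoidAlgebra.single q.1 1)
        * B (MonoidAlgebra.single p.2 1) (MonoidAlgebra.single q.2 1)

/-- The quantum integer `[n]_c`. -/
def qnum {𝔽 : Type} [Field 𝔽] (c : 𝔽) (n : ℕ) : 𝔽 :=
  (c ^ (n : ℤ) - c ^ (-(n : ℤ))) / (c - c⁻¹)

/-- The quantum factorial `[n]_c!`. -/
def qfact {𝔽 : Type} [Field 𝔽] (c : 𝔽) (n : ℕ) : 𝔽 :=
  ∏ k ∈ Finset.range n, qnum c (k + 1)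

/-- The divided power `θ_i^{(n)} = θ_i^n / [n]_{v_i}!`. -/
def θdiv [DecidableEq I] {𝔽 : Type} [Field 𝔽] (cd : CartanDatum I) (v : 𝔽)
    (i : I) (n : ℕ) : FA 𝔽 I :=
  (qfact (v ^ cd.d i) n)⁻¹ • (θ 𝔽 i) ^ n

/-- The twisted quantum Serre element
`D_{ij} = Σ_{k+k'=1-a_{ij}} (-1)^k β(i,j)^{-k} θ_i^{(k)} θ_j θ_i^{(k')}`. -/
def Dij [DecidableEq I] {𝔽 : Type} [Field 𝔽] (cd : CartanDatum I) (v : 𝔽)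
    (g : I → I → 𝔽) (i j : I) : FA 𝔽 I :=
  ∑ k ∈ Finset.range ((1 - cd.a i j).toNat + 1),
    ((-1 : 𝔽) ^ k * ((g i j)⁻¹) ^ k) •
      (θdiv cd v i k * θ 𝔽 j * θdiv cd v i ((1 - cd.a i j).toNat - k))


/-!
Lusztig's argument, with the twist `β`. Write `ₘr x` for the component of `r x` in `θ m ⊗ '𝔣`.
Since `r` is multiplicative for the twisted product, `ₘr` is a twisted derivation:
`ₘr (θ m' y) = δ_{m m'} y + v^{-m·m'} β(m', m) θ m' (ₘr y)`.
On the Serre element it gives, for `m = j`, `θ_i^{1 - a_ij}` times an alternating sum of inverse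
products of quantum factorials, which vanishes; for `m = i`, two sums whose terms cancel in pairs
(`β(i,j)β(j,i) = 1` and `β(i,i) = 1` make the twists match); and `0` for every other `m`.
Finally `(u, θ m) = 0` for every word `u ≠ θ m`, so `(x, θ m y) = (r x, θ m ⊗ y)` only sees `ₘr x`:
an element `x` with `(x, 1) = 0` that is killed by every `ₘr` lies in the radical.
-/

open Finset

namespace CartanDatum

variable {I : Type} (cd : CartanDatum I)

lemma c_self (i : I) : cd.c i i = 2 * cd.d i := by
  obtain ⟨e, he⟩ := cd.even i
  rw [d, he]
  omega

lemma d_pos (i : I) : 0 < cd.d i := by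
  have := cd.pos i
  rw [c_self] at this
  omega

lemma a_nonpos {i j : I} (hij : i ≠ j) : cd.a i j ≤ 0 := by
  have := Int.ediv_le_ediv (cd.pos i) (cd.nonpos i j hij)
  rwa [Int.zero_ediv] at this

lemma c_eq_d_mul_a {i j : I} (hij : i ≠ j) : cd.c i j = cd.d i * cd.a i j := by
  obtain ⟨t, ht⟩ := cd.dvd i j hij
  have ha : cd.a i j = t := by
    rw [a, ht, Int.mul_ediv_cancel_left _ (cd.pos i).ne']
  rw [ha]
  rw [c_self] at ht
  linarith

lemma zpow_neg_c_of_ne {G : Type*} [DivisionMonoid G] (v : G) {i j : I} (hij : i ≠ j) :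
    v ^ (-(cd.c i j)) = (v ^ cd.d i) ^ ((1 - cd.a i j).toNat - 1) := by
  have ha := cd.a_nonpos hij
  have hn : (((1 - cd.a i j).toNat - 1 : ℕ) : ℤ) = -cd.a i j := by omega
  rw [← zpow_natCast, ← zpow_mul, hn, cd.c_eq_d_mul_a hij, mul_neg]

lemma dotN_zero_left (ν : I →₀ ℕ) : cd.dotN 0 ν = 0 := by
  simp [dotN]

lemma dotN_zero_right (ν : I →₀ ℕ) : cd.dotN ν 0 = 0 := by
  simp [dotN]

lemma dotN_δN (m m' : I) : cd.dotN (δN m) (δN m') = cd.c m m' := by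
  simp [dotN, δN]

end CartanDatum

lemma Transcendental.not_isOfFinOrder {R A : Type*} [CommRing R] [Nontrivial R] [Ring A]
    [Algebra R A] {x : A} (hx : Transcendental R x) : ¬IsOfFinOrder x := by
  rw [isOfFinOrder_iff_pow_eq_one]
  rintro ⟨n, hn, h⟩
  exact hx (IsAlgebraic.of_pow hn (h ▸ isAlgebraic_one))

lemma sum_range_succ_add_eq_zero {M : Type*} [AddCommMonoid M] {A B : ℕ → M} {n : ℕ}
    (hA : A 0 = 0) (hB : B n = 0) (h : ∀ k < n, A (k + 1) + B k = 0) :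
    ∑ k ∈ range (n + 1), (A k + B k) = 0 := by
  rw [sum_add_distrib, sum_range_succ' A, sum_range_succ B, hA, hB, add_zero, add_zero,
    ← sum_add_distrib]
  exact sum_eq_zero fun k hk => h k (mem_range.mp hk)

section QuantumNumbers

variable {𝔽 : Type} [Field 𝔽] {q : 𝔽}

lemma qnum_zero (q : 𝔽) : qnum q 0 = 0 := by
  simp [qnum]

lemma qnum_add (hq₀ : q ≠ 0) (a b : ℕ) :
    qnum q (a + b) = q ^ a * qnum q b + (q ^ b)⁻¹ * qnum q a := by
  simp only [qnum, Nat.cast_add, zpow_neg, zpow_natCast, neg_add, zpow_add₀ hq₀]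
  field_simp
  ring

lemma qfact_succ (q : 𝔽) (n : ℕ) : qfact q (n + 1) = qfact q n * qnum q (n + 1) :=
  prod_range_succ _ n

variable (hq₀ : q ≠ 0) (hq : ¬IsOfFinOrder q)
include hq₀ hq

lemma pow_sub_inv_pow_ne_zero {n : ℕ} (hn : n ≠ 0) : q ^ n - (q ^ n)⁻¹ ≠ 0 := by
  intro h
  refine hq (isOfFinOrder_iff_pow_eq_one.mpr ⟨2 * n, by omega, ?_⟩)
  rw [mul_comm, pow_mul, sq]
  nth_rewrite 2 [sub_eq_zero.mp h]
  exact mul_inv_cancel₀ (pow_ne_zero n hq₀)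

lemma qnum_ne_zero {n : ℕ} (hn : n ≠ 0) : qnum q n ≠ 0 := by
  have h1 := pow_sub_inv_pow_ne_zero hq₀ hq one_ne_zero
  rw [pow_one] at h1
  simpa [qnum, zpow_neg] using div_ne_zero (pow_sub_inv_pow_ne_zero hq₀ hq hn) h1

lemma qfact_ne_zero (n : ℕ) : qfact q n ≠ 0 :=
  prod_ne_zero_iff.mpr fun k _ => qnum_ne_zero hq₀ hq k.succ_ne_zero

lemma geom_sum_inv_sq (n : ℕ) :
    ∑ s ∈ range (n + 1), ((q ^ 2)⁻¹) ^ s = (q ^ n)⁻¹ * qnum q (n + 1) := by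
  have h2 : q ^ 2 - 1 ≠ 0 :=
    sub_ne_zero.mpr fun h => hq (isOfFinOrder_iff_pow_eq_one.mpr ⟨2, two_pos, h⟩)
  have h2' : 1 - q ^ 2 ≠ 0 := by rwa [← neg_sub, neg_ne_zero]
  have hx : (q ^ 2)⁻¹ ≠ 1 := by
    rw [Ne, inv_eq_one]
    exact sub_ne_zero.mp h2
  have e : ((q ^ 2)⁻¹) ^ (n + 1) = ((q ^ n) ^ 2 * q ^ 2)⁻¹ := by
    rw [inv_pow, ← pow_mul, ← pow_mul, ← pow_add]
    ring_nf
  rw [geom_sum_eq hx, e]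
  simp only [qnum, zpow_neg, zpow_natCast, pow_succ]
  field_simp
  ring

/-- Multiplying by `[n]` and splitting `[n] = q^k [n-k] + q^{k-n} [k]` makes the sum telescope. -/
lemma sum_alternating_qfact_inv {n : ℕ} (hn : n ≠ 0) :
    ∑ k ∈ range (n + 1), (-1) ^ k * (q ^ (n - 1)) ^ k * ((qfact q k)⁻¹ * (qfact q (n - k))⁻¹)
      = 0 := by
  set c : ℕ → 𝔽 := fun k => (-1) ^ k * (q ^ (n - 1)) ^ k * ((qfact q k)⁻¹ * (qfact q (n - k))⁻¹)
  refine (mul_eq_zero.mp (?_ : qnum q n * ∑ k ∈ range (n + 1), c k = 0)).resolve_left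
    (qnum_ne_zero hq₀ hq hn)
  have split : ∀ k ∈ range (n + 1), qnum q n * c k
      = c k * ((q ^ (n - k))⁻¹ * qnum q k) + c k * (q ^ k * qnum q (n - k)) := by
    intro k hk
    rw [← Nat.add_sub_of_le (Nat.lt_succ_iff.mp (mem_range.mp hk)), qnum_add hq₀,
      Nat.add_sub_cancel_left]
    ring
  rw [mul_sum, sum_congr rfl split]
  refine sum_range_succ_add_eq_zero (by simp [qnum_zero]) (by simp [qnum_zero]) fun k hk => ?_
  obtain ⟨m, rfl⟩ := Nat.exists_eq_add_of_lt hk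
  simp only [c, show k + m + 1 - (k + 1) = m by omega, show k + m + 1 - k = m + 1 by omega,
    show k + m + 1 - 1 = k + m by omega, qfact_succ]
  have := qnum_ne_zero hq₀ hq k.succ_ne_zero
  have := qnum_ne_zero hq₀ hq m.succ_ne_zero
  have := qfact_ne_zero hq₀ hq k
  have := qfact_ne_zero hq₀ hq m
  field_simp
  ring

/-- The contributions of the `(k+1)`-st and the `k`-th summand of the Serre element to the
coefficient of `θ_i^k θ_j θ_i^m` in its `ᵢr`, where `x = β(i,j)⁻¹` and `1 - a_ij = k + m + 1`. -/
lemma serre_coeff_cancel (x : 𝔽) (k m : ℕ) :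
    (-1) ^ (k + 1) * x ^ (k + 1) * ((qfact q (k + 1))⁻¹ * (qfact q m)⁻¹)
        * ∑ s ∈ range (k + 1), ((q ^ 2)⁻¹) ^ s
      + (-1) ^ k * x ^ k * ((qfact q k)⁻¹ * (qfact q (m + 1))⁻¹)
        * (((q ^ 2)⁻¹) ^ k * (q ^ (k + m) * x) * ∑ s ∈ range (m + 1), ((q ^ 2)⁻¹) ^ s) = 0 := by
  rw [geom_sum_inv_sq hq₀ hq, geom_sum_inv_sq hq₀ hq, qfact_succ, qfact_succ]
  have := qnum_ne_zero hq₀ hq k.succ_ne_zero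
  have := qnum_ne_zero hq₀ hq m.succ_ne_zero
  have := qfact_ne_zero hq₀ hq k
  have := qfact_ne_zero hq₀ hq m
  simp only [inv_pow, ← pow_mul]
  field_simp
  ring

end QuantumNumbers

section FreeAlgebraModel

open MonoidAlgebra

variable {I 𝔽 : Type} [Field 𝔽]

lemma FreeMonoid.of_mul_eq_of_iff {m m' : I} {w : FreeMonoid I} :
    FreeMonoid.of m' * w = FreeMonoid.of m ↔ m' = m ∧ w = 1 := by
  rw [← FreeMonoid.toList.injective.eq_iff, ← FreeMonoid.toList.injective.eq_iff (b := 1)]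
  simp [FreeMonoid.toList_one]

lemma FreeMonoid.of_mul_ne_one (m : I) (w : FreeMonoid I) : FreeMonoid.of m * w ≠ 1 := by
  rw [← FreeMonoid.toList.injective.ne_iff]
  simp [FreeMonoid.toList_one]

lemma MultForm.f_zero_left (β : MultForm I 𝔽) (μ : I →₀ ℕ) : β.f 0 μ = 1 := by
  have h := β.add_left 0 0 μ
  rw [add_zero] at h
  exact (mul_eq_left₀ (β.ne_zero 0 μ)).mp h.symm

lemma MultForm.f_zero_right (β : MultForm I 𝔽) (μ : I →₀ ℕ) : β.f μ 0 = 1 := by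
  have h := β.add_right μ 0 0
  rw [add_zero] at h
  exact (mul_eq_left₀ (β.ne_zero μ 0)).mp h.symm

lemma θ_eq_single (m : I) : θ 𝔽 m = single (FreeMonoid.of m) 1 := rfl

lemma single_of_mul (m : I) (w : FreeMonoid I) :
    (single (FreeMonoid.of m * w) 1 : FA 𝔽 I) = θ 𝔽 m * single w 1 := by
  rw [θ_eq_single, single_mul_single, one_mul]

lemma tmul_single_single (w u : FreeMonoid I) (a b : 𝔽) :
    tmul (single w a) (single u b) = (single (w, u) (a * b) : TA 𝔽 I) := by
  unfold tmul
  rw [coeff_single, coeff_single, Finsupp.sum_single_index, Finsupp.sum_single_index]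
  · rfl
  all_goals simp

/-- The right tensor factor of the `w₀ ⊗ -` component of an element of `'𝔣 ⊗ '𝔣`. -/
def slice (w₀ : FreeMonoid I) : TA 𝔽 I →ₗ[𝔽] FA 𝔽 I :=
  (coeffLinearEquiv 𝔽).symm.toLinearMap ∘ₗ
    Finsupp.lcomapDomain (Prod.mk w₀) (Prod.mk_right_injective w₀) ∘ₗ
      (coeffLinearEquiv 𝔽).toLinearMap

lemma coeff_slice (w₀ u : FreeMonoid I) (z : TA 𝔽 I) :
    (slice w₀ z).coeff u = z.coeff (w₀, u) := rfl

lemma slice_single_self (w₀ u : FreeMonoid I) (a : 𝔽) :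
    slice w₀ (single (w₀, u) a) = single u a := by
  ext u'
  by_cases h : u = u' <;> simp [coeff_slice, h]

lemma slice_single_of_ne {w₀ : FreeMonoid I} {p : FreeMonoid I × FreeMonoid I} (h : p.1 ≠ w₀)
    (a : 𝔽) : slice w₀ (single p a) = 0 := by
  ext u
  simp [coeff_slice, Prod.ext_iff, Ne.symm h]

/-- Lusztig's `ₘr`. -/
def leftDeriv (r : FA 𝔽 I →ₗ[𝔽] TA 𝔽 I) (m : I) : FA 𝔽 I →ₗ[𝔽] FA 𝔽 I :=
  slice (FreeMonoid.of m) ∘ₗ r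

lemma leftDeriv_one {r : FA 𝔽 I →ₗ[𝔽] TA 𝔽 I} (hr1 : r 1 = tmul 1 1) (m : I) :
    leftDeriv r m 1 = 0 := by
  rw [leftDeriv, LinearMap.comp_apply, hr1, one_def, tmul_single_single]
  exact slice_single_of_ne (FreeMonoid.one_ne_of m) _

variable (cd : CartanDatum I) (v : 𝔽) (β : MultForm I 𝔽)

def derivTwist (m m' : I) : 𝔽 := v ^ (-(cd.c m m')) * β.f (δN m') (δN m)

variable {cd v} {i j : I}

lemma derivTwist_self (hβii : β.f (δN i) (δN i) = 1) :
    derivTwist cd v β i i = ((v ^ cd.d i) ^ 2)⁻¹ := by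
  rw [derivTwist, hβii, mul_one, cd.c_self, ← zpow_natCast, ← zpow_mul, ← zpow_neg, mul_comm]
  rfl

lemma derivTwist_of_ne (hij : i ≠ j) (hββ : β.f (δN i) (δN j) * β.f (δN j) (δN i) = 1) :
    derivTwist cd v β i j
      = (v ^ cd.d i) ^ ((1 - cd.a i j).toNat - 1) * (β.f (δN i) (δN j))⁻¹ := by
  rw [derivTwist, cd.zpow_neg_c_of_ne v hij, eq_inv_of_mul_eq_one_right hββ]

lemma derivTwist_of_ne_swap (hij : i ≠ j) :
    derivTwist cd v β j i = (v ^ cd.d i) ^ ((1 - cd.a i j).toNat - 1) * β.f (δN i) (δN j) := by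
  rw [derivTwist, cd.symm, cd.zpow_neg_c_of_ne v hij]

end FreeAlgebraModel

section TwistedDerivation

open MonoidAlgebra

variable {I 𝔽 : Type} [DecidableEq I] [Field 𝔽]

lemma wt_one : wt (1 : FreeMonoid I) = 0 := rfl

lemma wt_of (m : I) : wt (FreeMonoid.of m) = δN m := by
  simp [wt, δN]

variable (cd : CartanDatum I) (v : 𝔽) (β : MultForm I 𝔽)

lemma tMul_single_single (p q : FreeMonoid I × FreeMonoid I) (a b : 𝔽) :
    tMul cd v β (single p a) (single q b) = single (p.1 * q.1, p.2 * q.2)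
      (a * b * v ^ (-(cd.dotN (wt q.1) (wt p.2))) * β.f (wt p.2) (wt q.1)) := by
  unfold tMul
  rw [coeff_single, coeff_single, Finsupp.sum_single_index, Finsupp.sum_single_index]
  · rfl
  all_goals simp

lemma tMul_zero_right (x : TA 𝔽 I) : tMul cd v β x 0 = 0 := by
  simp [tMul]

lemma tMul_add_right (x z z' : TA 𝔽 I) :
    tMul cd v β x (z + z') = tMul cd v β x z + tMul cd v β x z' := by
  unfold tMul
  rw [← Finsupp.sum_add]
  refine Finsupp.sum_congr fun p _ => ?_
  rw [coeff_add]
  refine Finsupp.sum_add_index' (by simp) fun q b b' => ?_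
  simp only [ofCoeff_single, ← single_add]
  ring_nf

lemma tMul_add_left (z z' x : TA 𝔽 I) :
    tMul cd v β (z + z') x = tMul cd v β z x + tMul cd v β z' x := by
  unfold tMul
  rw [coeff_add]
  refine Finsupp.sum_add_index' (by simp) fun p a a' => ?_
  rw [← Finsupp.sum_add]
  refine Finsupp.sum_congr fun q _ => ?_
  simp only [ofCoeff_single, ← single_add]
  ring_nf

lemma slice_of_tMul_left_letter (m m' : I) (z : TA 𝔽 I) :
    slice (FreeMonoid.of m) (tMul cd v β (single (FreeMonoid.of m', 1) 1) z)
      = if m' = m then slice 1 z else 0 := by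
  induction z using MonoidAlgebra.induction_linear with
  | zero => simp [tMul_zero_right]
  | add z z' hz hz' => split_ifs at hz hz' ⊢ <;> simp [tMul_add_right, hz, hz']
  | single q b =>
    rw [tMul_single_single]
    simp only [wt_one, CartanDatum.dotN_zero_right, MultForm.f_zero_left, one_mul, mul_one,
      neg_zero, zpow_zero]
    rcases q with ⟨w, u⟩
    by_cases h : m' = m ∧ w = 1
    · obtain ⟨rfl, rfl⟩ := h
      simp [slice_single_self]
    · rw [slice_single_of_ne (mt FreeMonoid.of_mul_eq_of_iff.mp h)]
      split_ifs with hm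
      · exact (slice_single_of_ne (fun hw => h ⟨hm, hw⟩) b).symm
      · rfl

lemma slice_one_tMul_left_letter (m' : I) (z : TA 𝔽 I) :
    slice 1 (tMul cd v β (single (FreeMonoid.of m', 1) 1) z) = 0 := by
  induction z using MonoidAlgebra.induction_linear with
  | zero => simp [tMul_zero_right]
  | add z z' hz hz' => simp [tMul_add_right, hz, hz']
  | single q b =>
    rw [tMul_single_single]
    exact slice_single_of_ne (FreeMonoid.of_mul_ne_one m' q.1) _

lemma slice_of_tMul_right_letter (m m' : I) (z : TA 𝔽 I) :
    slice (FreeMonoid.of m) (tMul cd v β (single (1, FreeMonoid.of m') 1) z)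
      = derivTwist cd v β m m' • (θ 𝔽 m' * slice (FreeMonoid.of m) z) := by
  induction z using MonoidAlgebra.induction_linear with
  | zero => simp [tMul_zero_right]
  | add z z' hz hz' => simp [tMul_add_right, hz, hz', mul_add]
  | single q b =>
    rw [tMul_single_single]
    rcases q with ⟨w, u⟩
    by_cases h : w = FreeMonoid.of m
    · subst h
      simp [slice_single_self, wt_of, CartanDatum.dotN_δN, derivTwist, θ, single_mul_single]
      ring
    · simp [slice_single_of_ne, h]

lemma slice_one_tMul_right_letter (m' : I) (z : TA 𝔽 I) :
    slice 1 (tMul cd v β (single (1, FreeMonoid.of m') 1) z) = θ 𝔽 m' * slice 1 z := by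
  induction z using MonoidAlgebra.induction_linear with
  | zero => simp [tMul_zero_right]
  | add z z' hz hz' => simp [tMul_add_right, hz, hz', mul_add]
  | single q b =>
    rw [tMul_single_single]
    rcases q with ⟨w, u⟩
    by_cases h : w = 1
    · subst h
      simp [slice_single_self, wt_one, CartanDatum.dotN_zero_left, MultForm.f_zero_right, θ,
        single_mul_single]
    · simp [slice_single_of_ne, h]

variable {cd v β} {r : FA 𝔽 I →ₗ[𝔽] TA 𝔽 I} (hr1 : r 1 = tmul 1 1)
  (hrθ : ∀ i : I, r (θ 𝔽 i) = tmul (θ 𝔽 i) 1 + tmul 1 (θ 𝔽 i))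
  (hrm : ∀ x y : FA 𝔽 I, r (x * y) = tMul cd v β (r x) (r y))

include hrθ hrm in
lemma r_θ_mul (m' : I) (y : FA 𝔽 I) :
    r (θ 𝔽 m' * y) = tMul cd v β (single (FreeMonoid.of m', 1) 1) (r y)
      + tMul cd v β (single (1, FreeMonoid.of m') 1) (r y) := by
  rw [hrm, hrθ, tMul_add_left, θ_eq_single, one_def, tmul_single_single, tmul_single_single,
    one_mul]

include hr1 hrθ hrm in
lemma slice_one_r (x : FA 𝔽 I) : slice 1 (r x) = x := by
  induction x using MonoidAlgebra.induction_on with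
  | of w =>
    induction w using FreeMonoid.inductionOn' with
    | one => rw [map_one, hr1, one_def, tmul_single_single, slice_single_self, one_mul]
    | of_mul m w ih =>
      rw [map_mul, show of 𝔽 _ (FreeMonoid.of m) = θ 𝔽 m from rfl, r_θ_mul hrθ hrm, map_add,
        slice_one_tMul_left_letter, slice_one_tMul_right_letter, zero_add, ih]
  | add x y hx hy => rw [map_add, map_add, hx, hy]
  | smul a x hx => rw [map_smul, map_smul, hx]

include hr1 hrθ hrm in
lemma leftDeriv_θ_mul (m m' : I) (y : FA 𝔽 I) :
    leftDeriv r m (θ 𝔽 m' * y)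
      = (if m' = m then y else 0) + derivTwist cd v β m m' • (θ 𝔽 m' * leftDeriv r m y) := by
  rw [leftDeriv, LinearMap.comp_apply, r_θ_mul hrθ hrm, map_add, slice_of_tMul_left_letter,
    slice_of_tMul_right_letter, slice_one_r hr1 hrθ hrm]
  rfl

include hr1 hrθ hrm in
lemma leftDeriv_θ_pow_mul (m m' : I) (k : ℕ) (y : FA 𝔽 I) :
    leftDeriv r m (θ 𝔽 m' ^ k * y)
      = (if m' = m then (∑ s ∈ range k, derivTwist cd v β m m' ^ s) • (θ 𝔽 m' ^ (k - 1) * y)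
          else 0)
        + derivTwist cd v β m m' ^ k • (θ 𝔽 m' ^ k * leftDeriv r m y) := by
  induction k with
  | zero => simp
  | succ k ih =>
    rw [pow_succ', mul_assoc, leftDeriv_θ_mul hr1 hrθ hrm, ih, mul_add, smul_add, ← add_assoc]
    split_ifs with h
    · subst h
      rcases k with _ | k
      · simp
      · rw [geom_sum_succ (n := k + 1), Nat.add_sub_cancel, Nat.add_sub_cancel, mul_smul_comm,
          mul_smul_comm, ← mul_assoc, ← mul_assoc, ← pow_succ', ← pow_succ']
        module
    · simp [smul_smul, pow_succ', mul_assoc]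

include hr1 hrθ hrm in
lemma leftDeriv_θ_pow_of_ne {m m' : I} (h : m' ≠ m) (k : ℕ) :
    leftDeriv r m (θ 𝔽 m' ^ k) = 0 := by
  simpa [h, leftDeriv_one hr1] using leftDeriv_θ_pow_mul hr1 hrθ hrm m m' k 1

include hr1 hrθ hrm in
lemma leftDeriv_θ_pow_self (m : I) (k : ℕ) :
    leftDeriv r m (θ 𝔽 m ^ k)
      = (∑ s ∈ range k, derivTwist cd v β m m ^ s) • θ 𝔽 m ^ (k - 1) := by
  simpa [leftDeriv_one hr1] using leftDeriv_θ_pow_mul hr1 hrθ hrm m m k 1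

include hr1 hrθ hrm in
lemma leftDeriv_serreWord_of_ne {i j m : I} (hi : i ≠ m) (hj : j ≠ m) (k l : ℕ) :
    leftDeriv r m (θ 𝔽 i ^ k * θ 𝔽 j * θ 𝔽 i ^ l) = 0 := by
  rw [mul_assoc, leftDeriv_θ_pow_mul hr1 hrθ hrm, leftDeriv_θ_mul hr1 hrθ hrm,
    leftDeriv_θ_pow_of_ne hr1 hrθ hrm hi]
  simp [hi, hj]

include hr1 hrθ hrm in
lemma leftDeriv_serreWord_right {i j : I} (hij : i ≠ j) (k l : ℕ) :
    leftDeriv r j (θ 𝔽 i ^ k * θ 𝔽 j * θ 𝔽 i ^ l)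
      = derivTwist cd v β j i ^ k • θ 𝔽 i ^ (k + l) := by
  rw [mul_assoc, leftDeriv_θ_pow_mul hr1 hrθ hrm, leftDeriv_θ_mul hr1 hrθ hrm,
    leftDeriv_θ_pow_of_ne hr1 hrθ hrm hij]
  simp [hij, pow_add]

include hr1 hrθ hrm in
lemma leftDeriv_serreWord_left {i j : I} (hij : i ≠ j) (k l : ℕ) :
    leftDeriv r i (θ 𝔽 i ^ k * θ 𝔽 j * θ 𝔽 i ^ l)
      = (∑ s ∈ range k, derivTwist cd v β i i ^ s) • (θ 𝔽 i ^ (k - 1) * θ 𝔽 j * θ 𝔽 i ^ l)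
        + (derivTwist cd v β i i ^ k * derivTwist cd v β i j
            * ∑ s ∈ range l, derivTwist cd v β i i ^ s)
          • (θ 𝔽 i ^ k * θ 𝔽 j * θ 𝔽 i ^ (l - 1)) := by
  rw [mul_assoc, leftDeriv_θ_pow_mul hr1 hrθ hrm, leftDeriv_θ_mul hr1 hrθ hrm,
    leftDeriv_θ_pow_self hr1 hrθ hrm]
  simp [hij.symm, mul_assoc, smul_smul]

end TwistedDerivation

section SerreElement

variable {I 𝔽 : Type} [DecidableEq I] [Field 𝔽]

lemma Dij_eq_sum (cd : CartanDatum I) (v : 𝔽) (g : I → I → 𝔽) (i j : I) :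
    Dij cd v g i j = ∑ k ∈ range ((1 - cd.a i j).toNat + 1),
      ((-1) ^ k * (g i j)⁻¹ ^ k * ((qfact (v ^ cd.d i) k)⁻¹
          * (qfact (v ^ cd.d i) ((1 - cd.a i j).toNat - k))⁻¹))
        • (θ 𝔽 i ^ k * θ 𝔽 j * θ 𝔽 i ^ ((1 - cd.a i j).toNat - k)) := by
  refine sum_congr rfl fun k _ => ?_
  rw [θdiv, θdiv, smul_mul_assoc, smul_mul_assoc, mul_smul_comm, smul_smul, smul_smul]
  ring_nf

variable {cd : CartanDatum I} {v : 𝔽} (β : MultForm I 𝔽) {i j : I}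
  {r : FA 𝔽 I →ₗ[𝔽] TA 𝔽 I} (hr1 : r 1 = tmul 1 1)
  (hrθ : ∀ i : I, r (θ 𝔽 i) = tmul (θ 𝔽 i) 1 + tmul 1 (θ 𝔽 i))
  (hrm : ∀ x y : FA 𝔽 I, r (x * y) = tMul cd v β (r x) (r y))
include hr1 hrθ hrm

lemma leftDeriv_Dij_of_ne {m : I} (hi : i ≠ m) (hj : j ≠ m) :
    leftDeriv r m (Dij cd v (fun a b => β.f (δN a) (δN b)) i j) = 0 := by
  rw [Dij_eq_sum, map_sum]
  exact sum_eq_zero fun k _ => by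
    rw [map_smul, leftDeriv_serreWord_of_ne hr1 hrθ hrm hi hj, smul_zero]

variable (hij : i ≠ j) (hv₀ : v ≠ 0) (hq : ¬IsOfFinOrder (v ^ cd.d i))
include hij hv₀ hq

lemma leftDeriv_Dij_right :
    leftDeriv r j (Dij cd v (fun a b => β.f (δN a) (δN b)) i j) = 0 := by
  set n := (1 - cd.a i j).toNat with hn
  set q := v ^ cd.d i with hq_def
  set g := β.f (δN i) (δN j) with hg_def
  have hn0 : n ≠ 0 := by
    have := cd.a_nonpos hij
    omega
  have hg : g ≠ 0 := β.ne_zero _ _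
  have term : ∀ k ∈ range (n + 1), leftDeriv r j
      (((-1) ^ k * g⁻¹ ^ k * ((qfact q k)⁻¹ * (qfact q (n - k))⁻¹))
        • (θ 𝔽 i ^ k * θ 𝔽 j * θ 𝔽 i ^ (n - k)))
      = ((-1) ^ k * (q ^ (n - 1)) ^ k * ((qfact q k)⁻¹ * (qfact q (n - k))⁻¹)) • θ 𝔽 i ^ n := by
    intro k hk
    rw [map_smul, leftDeriv_serreWord_right hr1 hrθ hrm hij, derivTwist_of_ne_swap β hij,
      Nat.add_sub_of_le (Nat.lt_succ_iff.mp (mem_range.mp hk)), smul_smul, ← hq_def, ← hn,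
      ← hg_def, mul_pow, inv_pow]
    congr 1
    field_simp
  rw [Dij_eq_sum, map_sum, sum_congr rfl term, ← sum_smul,
    sum_alternating_qfact_inv (zpow_ne_zero _ hv₀) hq hn0, zero_smul]

lemma leftDeriv_Dij_left (hββ : β.f (δN i) (δN j) * β.f (δN j) (δN i) = 1)
    (hβii : β.f (δN i) (δN i) = 1) :
    leftDeriv r i (Dij cd v (fun a b => β.f (δN a) (δN b)) i j) = 0 := by
  set n := (1 - cd.a i j).toNat
  set q := v ^ cd.d i
  set g := β.f (δN i) (δN j)
  set G : ℕ → 𝔽 := fun l => ∑ s ∈ range l, ((q ^ 2)⁻¹) ^ s with hG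
  set c : ℕ → 𝔽 := fun k => (-1) ^ k * g⁻¹ ^ k * ((qfact q k)⁻¹ * (qfact q (n - k))⁻¹) with hc
  have term : ∀ k ∈ range (n + 1),
      leftDeriv r i (c k • (θ 𝔽 i ^ k * θ 𝔽 j * θ 𝔽 i ^ (n - k)))
        = (c k * G k) • (θ 𝔽 i ^ (k - 1) * θ 𝔽 j * θ 𝔽 i ^ (n - k))
          + (c k * (((q ^ 2)⁻¹) ^ k * (q ^ (n - 1) * g⁻¹) * G (n - k)))
            • (θ 𝔽 i ^ k * θ 𝔽 j * θ 𝔽 i ^ (n - k - 1)) := by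
    intro k _
    rw [map_smul, leftDeriv_serreWord_left hr1 hrθ hrm hij, derivTwist_self β hβii,
      derivTwist_of_ne β hij hββ, smul_add, smul_smul, smul_smul]
  rw [Dij_eq_sum, map_sum, sum_congr rfl term]
  refine sum_range_succ_add_eq_zero (by simp [hG]) (by simp [hG]) fun k hk => ?_
  obtain ⟨m, hm⟩ := Nat.exists_eq_add_of_lt hk
  rw [show k + 1 - 1 = k by omega, show n - (k + 1) = m by omega, show n - k - 1 = m by omega,
    ← add_smul]
  convert zero_smul 𝔽 _
  simpa only [hc, hG, show n - (k + 1) = m by omega, show n - k = m + 1 by omega,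
    show n - 1 = k + m by omega] using serre_coeff_cancel (zpow_ne_zero _ hv₀) hq g⁻¹ k m

lemma leftDeriv_Dij (hββ : β.f (δN i) (δN j) * β.f (δN j) (δN i) = 1)
    (hβii : β.f (δN i) (δN i) = 1) (m : I) :
    leftDeriv r m (Dij cd v (fun a b => β.f (δN a) (δN b)) i j) = 0 := by
  by_cases hi : i = m
  · subst hi
    exact leftDeriv_Dij_left β hr1 hrθ hrm hij hv₀ hq hββ hβii
  by_cases hj : j = m
  · subst hj
    exact leftDeriv_Dij_right β hr1 hrθ hrm hij hv₀ hq
  exact leftDeriv_Dij_of_ne β hr1 hrθ hrm hi hj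

end SerreElement

section BilinearForm

open MonoidAlgebra

variable {I 𝔽 : Type} [DecidableEq I] [Field 𝔽] (α : MultForm I 𝔽)
  (B : FA 𝔽 I →ₗ[𝔽] FA 𝔽 I →ₗ[𝔽] 𝔽)

lemma pairT_single_right (z : TA 𝔽 I) (q : FreeMonoid I × FreeMonoid I) (b : 𝔽) :
    pairT α B z (single q b) = z.coeff.sum fun p a => a * b * α.f (wt p.1) (wt p.2)
      * B (single p.1 1) (single q.1 1) * B (single p.2 1) (single q.2 1) := by
  unfold pairT
  refine Finsupp.sum_congr fun p _ => ?_
  rw [coeff_single, Finsupp.sum_single_index (by simp)]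

lemma pairT_single_single (p q : FreeMonoid I × FreeMonoid I) (a b : 𝔽) :
    pairT α B (single p a) (single q b) = a * b * α.f (wt p.1) (wt p.2)
      * B (single p.1 1) (single q.1 1) * B (single p.2 1) (single q.2 1) := by
  rw [pairT_single_right, coeff_single, Finsupp.sum_single_index (by simp)]

lemma pairT_add_left (z z' x : TA 𝔽 I) :
    pairT α B (z + z') x = pairT α B z x + pairT α B z' x := by
  unfold pairT
  rw [coeff_add]
  refine Finsupp.sum_add_index' (by simp) fun p a a' => ?_
  rw [← Finsupp.sum_add]
  refine Finsupp.sum_congr fun q _ => ?_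
  ring

lemma pairT_add_right (x z z' : TA 𝔽 I) :
    pairT α B x (z + z') = pairT α B x z + pairT α B x z' := by
  unfold pairT
  rw [← Finsupp.sum_add]
  refine Finsupp.sum_congr fun p _ => ?_
  rw [coeff_add]
  refine Finsupp.sum_add_index' (by simp) fun q b b' => ?_
  ring

variable {cd : CartanDatum I} {v : 𝔽} {α B} {r : FA 𝔽 I →ₗ[𝔽] TA 𝔽 I} (hr1 : r 1 = tmul 1 1)
  (hrθ : ∀ i : I, r (θ 𝔽 i) = tmul (θ 𝔽 i) 1 + tmul 1 (θ 𝔽 i))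
  (hBsymm : ∀ x y, B x y = B y x) (hB1 : B 1 1 = 1)
  (hBθ : ∀ i j : I, B (θ 𝔽 i) (θ 𝔽 j) = if i = j then (1 - v ^ (-(cd.c i i)))⁻¹ else 0)
  (hBr : ∀ x y' y'', B x (y' * y'') = pairT α B (r x) (tmul y' y''))
  (hBl : ∀ x' x'' y, B (x' * x'') y = pairT α B (tmul x' x'') (r y))

include hrθ hB1 hBr in
lemma B_θ_one (m : I) : B (θ 𝔽 m) 1 = 0 := by
  have h := hBr (θ 𝔽 m) 1 1
  rw [one_mul, hrθ, θ_eq_single, one_def, tmul_single_single, tmul_single_single,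
    tmul_single_single, pairT_add_left, pairT_single_single, pairT_single_single] at h
  simp only [wt_one, wt_of, MultForm.f_zero_left, MultForm.f_zero_right, ← one_def,
    ← θ_eq_single, hB1] at h
  linear_combination -h

include hr1 hrθ hB1 hBr hBl in
lemma B_θ_mul_one (m : I) (y : FA 𝔽 I) : B (θ 𝔽 m * y) 1 = 0 := by
  induction y using MonoidAlgebra.induction_linear with
  | zero => simp
  | add y y' hy hy' => rw [mul_add, map_add, LinearMap.add_apply, hy, hy', add_zero]
  | single w b =>
    rw [hBl, hr1, θ_eq_single, one_def, tmul_single_single, tmul_single_single,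
      pairT_single_single]
    simp only [← one_def, ← θ_eq_single, B_θ_one hrθ hB1 hBr]
    ring

include hr1 hrθ hB1 hBr hBl in
lemma B_Dij_one (g : I → I → 𝔽) (i j : I) : B (Dij cd v g i j) 1 = 0 := by
  rw [Dij_eq_sum, map_sum, LinearMap.sum_apply]
  refine sum_eq_zero fun k _ => ?_
  rw [map_smul, LinearMap.smul_apply, smul_eq_zero]
  right
  cases k with
  | zero => rw [pow_zero, one_mul, B_θ_mul_one hr1 hrθ hB1 hBr hBl]
  | succ k => rw [pow_succ', mul_assoc, mul_assoc, B_θ_mul_one hr1 hrθ hB1 hBr hBl]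

include hr1 hrθ hBsymm hB1 hBθ hBr hBl in
lemma B_single_θ_of_ne {m : I} {u : FreeMonoid I} (hu : u ≠ FreeMonoid.of m) :
    B (single u 1) (θ 𝔽 m) = 0 := by
  cases u using FreeMonoid.casesOn with
  | one => rw [← one_def, hBsymm, B_θ_one hrθ hB1 hBr]
  | of_mul m' w =>
    cases w using FreeMonoid.casesOn with
    | one =>
      rw [mul_one] at hu
      rw [mul_one, ← θ_eq_single, hBθ, if_neg (fun h => hu (by rw [h]))]
    | of_mul x w =>
      rw [single_of_mul, hBl, hrθ, pairT_add_right, θ_eq_single, θ_eq_single, one_def,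
        tmul_single_single, tmul_single_single, tmul_single_single, pairT_single_single,
        pairT_single_single]
      simp only [← one_def, ← θ_eq_single, single_of_mul, B_θ_mul_one hr1 hrθ hB1 hBr hBl,
        B_θ_one hrθ hB1 hBr]
      ring

include hr1 hrθ hBsymm hB1 hBθ hBr hBl in
lemma B_eq_zero_of_leftDeriv_eq_zero {x : FA 𝔽 I} (hx1 : B x 1 = 0)
    (hx : ∀ m, leftDeriv r m x = 0) (z : FA 𝔽 I) : B x z = 0 := by
  induction z using MonoidAlgebra.induction_linear with
  | zero => simp
  | add z z' hz hz' => rw [map_add, hz, hz', add_zero]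
  | single w b =>
    rw [← mul_one b, ← smul_eq_mul, ← smul_single, map_smul]
    refine smul_eq_zero_of_right b ?_
    cases w using FreeMonoid.casesOn with
    | one => rwa [← one_def]
    | of_mul m w =>
      rw [single_of_mul, hBr, θ_eq_single, tmul_single_single, pairT_single_right]
      refine Finset.sum_eq_zero fun p hp => ?_
      by_cases hp1 : p.1 = FreeMonoid.of m
      · have hcoeff : (r x).coeff p = 0 := by
          simpa [leftDeriv, coeff_slice, ← hp1] using congr_arg (fun y => y.coeff p.2) (hx m)
        exact absurd hcoeff (Finsupp.mem_support_iff.mp hp)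
      · simp only [← θ_eq_single, B_single_θ_of_ne hr1 hrθ hBsymm hB1 hBθ hBr hBl hp1,
          mul_zero, zero_mul]

end BilinearForm

end
theorem twisted_serre_relations_general
    {I : Type} [DecidableEq I] (cd : CartanDatum I)
    {𝔽 : Type} [Field 𝔽] [CharZero 𝔽] (v : 𝔽) (hv : Transcendental ℚ v)
    (α β : MultForm I 𝔽)
    (hββ : ∀ i j : I, β.f (δN i) (δN j) * β.f (δN j) (δN i) = 1)
    (hβii : ∀ i : I, β.f (δN i) (δN i) = 1)
    (r : FA 𝔽 I →ₗ[𝔽] TA 𝔽 I)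
    (hr1 : r 1 = tmul 1 1)
    (hrθ : ∀ i : I, r (θ 𝔽 i) = tmul (θ 𝔽 i) 1 + tmul 1 (θ 𝔽 i))
    (hrm : ∀ x y : FA 𝔽 I, r (x * y) = tMul cd v β (r x) (r y))
    (B : FA 𝔽 I →ₗ[𝔽] FA 𝔽 I →ₗ[𝔽] 𝔽)
    (hBsymm : ∀ x y, B x y = B y x)
    (hB1 : B 1 1 = 1)
    (hBθ : ∀ i j : I, B (θ 𝔽 i) (θ 𝔽 j) = if i = j then (1 - v ^ (-(cd.c i i)))⁻¹ else 0)
    (hBr : ∀ x y' y'', B x (y' * y'') = pairT α B (r x) (tmul y' y''))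
    (hBl : ∀ x' x'' y, B (x' * x'') y = pairT α B (tmul x' x'') (r y))
    :
    ∀ i j : I, i ≠ j → ∀ z, B (Dij cd v (fun a b => β.f (δN a) (δN b)) i j) z = 0 := by
  intro i j hij
  have hv₀ : v ≠ 0 := by
    rintro rfl
    exact hv isAlgebraic_zero
  have hq : ¬IsOfFinOrder (v ^ cd.d i) := by
    have hd := cd.d_pos i
    rw [← Int.toNat_of_nonneg hd.le, zpow_natCast]
    exact (hv.pow (by omega)).not_isOfFinOrder
  exact B_eq_zero_of_leftDeriv_eq_zero hr1 hrθ hBsymm hB1 hBθ hBr hBl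
    (B_Dij_one hr1 hrθ hB1 hBr hBl _ i j)
    (leftDeriv_Dij β hr1 hrθ hrm hij hv₀ hq (hββ i j) (hβii i))

theorem twisted_serre_relations
    {I : Type} [Fintype I] [DecidableEq I] (cd : CartanDatum I)
    {𝔽 : Type} [Field 𝔽] [CharZero 𝔽] (v : 𝔽) (hv : Transcendental ℚ v)
    (α β : MultForm I 𝔽)
    (hαβ : ∀ i j : I, β.f (δN i) (δN j) * α.f (δN j) (δN i)
      = β.f (δN j) (δN i) * α.f (δN i) (δN j))
    (hββ : ∀ i j : I, β.f (δN i) (δN j) * β.f (δN j) (δN i) = 1)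
    (hβii : ∀ i : I, β.f (δN i) (δN i) = 1)
    (r : FA 𝔽 I →ₗ[𝔽] TA 𝔽 I)
    (hr1 : r 1 = tmul 1 1)
    (hrθ : ∀ i : I, r (θ 𝔽 i) = tmul (θ 𝔽 i) 1 + tmul 1 (θ 𝔽 i))
    (hrm : ∀ x y : FA 𝔽 I, r (x * y) = tMul cd v β (r x) (r y))
    (B : FA 𝔽 I →ₗ[𝔽] FA 𝔽 I →ₗ[𝔽] 𝔽)
    (hBsymm : ∀ x y, B x y = B y x)
    (hB1 : B 1 1 = 1)
    (hBθ : ∀ i j : I, B (θ 𝔽 i) (θ 𝔽 j) = if i = j then (1 - v ^ (-(cd.c i i)))⁻¹ else 0)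
    (hBr : ∀ x y' y'', B x (y' * y'') = pairT α B (r x) (tmul y' y''))
    (hBl : ∀ x' x'' y, B (x' * x'') y = pairT α B (tmul x' x'') (r y))
    :
    ∀ i j : I, i ≠ j → ∀ z, B (Dij cd v (fun a b => β.f (δN a) (δN b)) i j) z = 0 :=
  twisted_serre_relations_general cd v hv α β hββ hβii r hr1 hrθ hrm B hBsymm hB1 hBθ hBr hBl
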